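/- arXiv:2407.09947 — 4 statements merged into one kernel-verified Lean document; each statement's English description precedes it below -/
import Mathlib

section
/- Let A be a Banach algebra and J a closed two-sided ideal of A. Then J is co-Rosenthal (i.e., J^⊥ ⊆ WAP(A)) if and only if the quotient Banach algebra A/J is Arens regular. -/
noncomputable section

open NormedSpace Filter Topology

namespace ArensNote

variable {X A : Type*} [NormedAddCommGroup X] [NormedSpace ℂ X]
  [NormedAddCommGroup A] [NormedSpace ℂ A]

/-- The bidual of a normed space. -/
abbrev Bidual (E : Type*) [NormedAddCommGroup E] [NormedSpace ℂ E] :=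
  StrongDual ℂ (StrongDual ℂ E)

/-- The canonical embedding of a normed space into its bidual. -/
abbrev iota (E : Type*) [NormedAddCommGroup E] [NormedSpace ℂ E] :
    E →L[ℂ] Bidual E :=
  inclusionInDoubleDual ℂ E

section action

variable (sm : X →L[ℂ] A →L[ℂ] X)

/-- First adjoint of a (right) module action `sm` of `A` on `X`:
`⟨fodot sm f x, φ⟩ = ⟨f, x·φ⟩`. -/
def fodot (f : StrongDual ℂ X) (x : X) : StrongDual ℂ A :=
  f.comp (sm x)

@[simp] lemma fodot_apply (f : StrongDual ℂ X) (x : X) (φ : A) :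
    fodot sm f x φ = f (sm x φ) := rfl

lemma fodot_add (f g : StrongDual ℂ X) (x : X) :
    fodot sm (f + g) x = fodot sm f x + fodot sm g x := by
  ext φ; simp

lemma fodot_smul (c : ℂ) (f : StrongDual ℂ X) (x : X) :
    fodot sm (c • f) x = c • fodot sm f x := by
  ext φ; simp

lemma fodot_norm_le (f : StrongDual ℂ X) (x : X) :
    ‖fodot sm f x‖ ≤ ‖f‖ * (‖sm‖ * ‖x‖) :=
  le_trans (ContinuousLinearMap.opNorm_comp_le f (sm x))
    (mul_le_mul_of_nonneg_left (sm.le_opNorm x) (norm_nonneg f))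

/-- Second adjoint of the module action: `⟨mdot sm m f, x⟩ = ⟨m, f ⊙ x⟩`. -/
def mdot (m : Bidual A) (f : StrongDual ℂ X) : StrongDual ℂ X :=
  LinearMap.mkContinuous
    { toFun := fun x => m (fodot sm f x)
      map_add' := by
        intro x y
        have h : fodot sm f (x + y) = fodot sm f x + fodot sm f y := by
          ext φ; simp
        show m (fodot sm f (x + y)) = m (fodot sm f x) + m (fodot sm f y)
        rw [h, map_add]
      map_smul' := by
        intro c x
        have h : fodot sm f (c • x) = c • fodot sm f x := by
          ext φ; simp
        show m (fodot sm f (c • x)) = (RingHom.id ℂ) c • m (fodot sm f x)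
        rw [h, map_smul, RingHom.id_apply] }
    (‖m‖ * ‖f‖ * ‖sm‖)
    (fun x => by
      calc ‖m (fodot sm f x)‖ ≤ ‖m‖ * ‖fodot sm f x‖ := m.le_opNorm _
        _ ≤ ‖m‖ * (‖f‖ * (‖sm‖ * ‖x‖)) :=
            mul_le_mul_of_nonneg_left (fodot_norm_le sm f x) (norm_nonneg m)
        _ = ‖m‖ * ‖f‖ * ‖sm‖ * ‖x‖ := by ring)

@[simp] lemma mdot_apply (m : Bidual A) (f : StrongDual ℂ X) (x : X) :
    mdot sm m f x = m (fodot sm f x) := rfl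

lemma mdot_add (m : Bidual A) (f g : StrongDual ℂ X) :
    mdot sm m (f + g) = mdot sm m f + mdot sm m g := by
  ext x; simp [fodot_add, map_add]

lemma mdot_smul (m : Bidual A) (c : ℂ) (f : StrongDual ℂ X) :
    mdot sm m (c • f) = c • mdot sm m f := by
  ext x; simp [fodot_smul, map_smul]

lemma mdot_norm_le (m : Bidual A) (f : StrongDual ℂ X) :
    ‖mdot sm m f‖ ≤ ‖m‖ * ‖f‖ * ‖sm‖ :=
  LinearMap.mkContinuous_norm_le _ (by positivity) _

/-- The bidual module action : `⟨modAct sm p m, f⟩ = ⟨p, m · f⟩`. -/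
def modAct (p : Bidual X) (m : Bidual A) : Bidual X :=
  LinearMap.mkContinuous
    { toFun := fun f => p (mdot sm m f)
      map_add' := by
        intro f g
        show p (mdot sm m (f + g)) = p (mdot sm m f) + p (mdot sm m g)
        rw [mdot_add, map_add]
      map_smul' := by
        intro c f
        show p (mdot sm m (c • f)) = (RingHom.id ℂ) c • p (mdot sm m f)
        rw [mdot_smul, map_smul, RingHom.id_apply] }
    (‖p‖ * ‖m‖ * ‖sm‖)
    (fun f => by
      calc ‖p (mdot sm m f)‖ ≤ ‖p‖ * ‖mdot sm m f‖ := p.le_opNorm _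
        _ ≤ ‖p‖ * (‖m‖ * ‖f‖ * ‖sm‖) :=
            mul_le_mul_of_nonneg_left (mdot_norm_le sm m f) (norm_nonneg p)
        _ = ‖p‖ * ‖m‖ * ‖sm‖ * ‖f‖ := by ring)

@[simp] lemma modAct_apply (p : Bidual X) (m : Bidual A) (f : StrongDual ℂ X) :
    modAct sm p m f = p (mdot sm m f) := rfl

end action

section algebra

variable (mA : A →L[ℂ] A →L[ℂ] A)

/-- The first Arens product on the bidual:
`⟨m □ n, f⟩ = ⟨m, n·f⟩`, `⟨n·f, φ⟩ = ⟨n, f·φ⟩`, `⟨f·φ, ψ⟩ = ⟨f, φψ⟩`. -/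
def arens1 (m n : Bidual A) : Bidual A := modAct mA m n

/-- The second Arens product on the bidual:
`⟨m ◇ n, f⟩ = ⟨n, f·m⟩`, `⟨f·m, φ⟩ = ⟨m, φ·f⟩`, `⟨φ·f, ψ⟩ = ⟨f, ψφ⟩`. -/
def arens2 (m n : Bidual A) : Bidual A := modAct mA.flip n m

/-- A Banach algebra is Arens regular when the two Arens products coincide. -/
def ArensRegular : Prop :=
  ∀ m n : Bidual A, arens1 mA m n = arens2 mA m n

/-- The weakly almost periodic functionals on `A`. -/
def WAP : Set (StrongDual ℂ A) :=
  {f | ∀ m n : Bidual A, arens1 mA m n f = arens2 mA m n f}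

/-- `e` is a mixed identity: a right identity for the first Arens product and a
left identity for the second Arens product. -/
def IsMixedIdentity (e : Bidual A) : Prop :=
  (∀ m : Bidual A, arens1 mA m e = m) ∧ ∀ m : Bidual A, arens2 mA e m = m

/-- `mA` makes `A` into a (non-unital) Banach algebra. -/
structure IsBanachAlgebra : Prop where
  mul_assoc : ∀ a b c : A, mA (mA a b) c = mA a (mA b c)
  norm_mul_le : ∀ a b : A, ‖mA a b‖ ≤ ‖a‖ * ‖b‖

/-- `J` is a two-sided ideal for the multiplication `mA`. -/
def IsTwoSidedIdeal (J : Set A) : Prop :=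
  ∀ a b : A, a ∈ J → mA a b ∈ J ∧ mA b a ∈ J

/-- `A` has a contractive (two-sided) approximate identity. -/
def HasCAI : Prop :=
  ∃ l : Filter A, l.NeBot ∧ (∀ᶠ x in l, ‖x‖ ≤ 1) ∧
    (∀ a : A, Tendsto (fun x => mA x a) l (𝓝 a)) ∧
    ∀ a : A, Tendsto (fun x => mA a x) l (𝓝 a)

/-- `A` has a bounded (two-sided) approximate identity. -/
def HasBAI : Prop :=
  ∃ l : Filter A, l.NeBot ∧ (∃ C : ℝ, ∀ᶠ x in l, ‖x‖ ≤ C) ∧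
    (∀ a : A, Tendsto (fun x => mA x a) l (𝓝 a)) ∧
    ∀ a : A, Tendsto (fun x => mA a x) l (𝓝 a)

/-- `A` has a bounded right approximate identity. -/
def HasBRAI : Prop :=
  ∃ l : Filter A, l.NeBot ∧ (∃ C : ℝ, ∀ᶠ x in l, ‖x‖ ≤ C) ∧
    ∀ a : A, Tendsto (fun x => mA a x) l (𝓝 a)

/-- `A` has a bounded left approximate identity. -/
def HasBLAI : Prop :=
  ∃ l : Filter A, l.NeBot ∧ (∃ C : ℝ, ∀ᶠ x in l, ‖x‖ ≤ C) ∧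
    ∀ a : A, Tendsto (fun x => mA x a) l (𝓝 a)

end algebra

/-- The annihilator `S^⊥ ⊆ A*` of a subset `S ⊆ A`. -/
def perp (S : Set A) : Set (StrongDual ℂ A) := {f | ∀ a ∈ S, f a = 0}

/-- The annihilator in the bidual of a set of functionals. -/
def perp' (S : Set (StrongDual ℂ A)) : Set (Bidual A) := {m | ∀ f ∈ S, m f = 0}

/-- `A` is weakly sequentially complete. -/
def WeaklySequentiallyComplete (E : Type*) [NormedAddCommGroup E] [NormedSpace ℂ E] : Prop :=
  ∀ x : ℕ → E,
    (∀ f : StrongDual ℂ E, ∃ c : ℂ, Tendsto (fun n => f (x n)) atTop (𝓝 c)) →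
    ∃ a : E, ∀ f : StrongDual ℂ E, Tendsto (fun n => f (x n)) atTop (𝓝 (f a))

/-- The restriction map `A* → J*`, adjoint of the inclusion `J → A`. -/
def restrictDual (J : Submodule ℂ A) : StrongDual ℂ A →L[ℂ] StrongDual ℂ ↥J :=
  (ContinuousLinearMap.compL ℂ ↥J A ℂ).flip J.subtypeL

@[simp] lemma restrictDual_apply (J : Submodule ℂ A) (f : StrongDual ℂ A) (x : ↥J) :
    restrictDual J f x = f x := rfl

/-- The second adjoint `J** → A**` of the inclusion of a closed subspace `J` into `A`. -/
def bidualTrans (J : Submodule ℂ A) (m : Bidual ↥J) : Bidual A :=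
  m.comp (restrictDual J)

@[simp] lemma bidualTrans_apply (J : Submodule ℂ A) (m : Bidual ↥J) (f : StrongDual ℂ A) :
    bidualTrans J m f = m (restrictDual J f) := rfl

/-- The subspace `X × {0}` of the `ℓ¹`-direct sum `X ⊕₁ B`. -/
def sndZero (X B : Type*) [NormedAddCommGroup X] [NormedSpace ℂ X]
    [NormedAddCommGroup B] [NormedSpace ℂ B] : Submodule ℂ (WithLp 1 (X × B)) :=
  (Submodule.prod (⊤ : Submodule ℂ X) (⊥ : Submodule ℂ B)).comap
    (WithLp.linearEquiv 1 ℂ (X × B)).toLinearMap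

/-!
The quotient map `π : A → C` is a surjection of Banach spaces. Its transpose `π*` maps `C*`
onto `J^⊥`, and by the open mapping theorem it is bounded below, so by Hahn–Banach the
bitranspose `π** : A** → C**` is onto. Since `π` is multiplicative, `π**` intertwines each Arens
product of `A` with the corresponding one of `C`. Hence, for `g ∈ C*` and `m, n ∈ A**`,
`⟨π** m □ π** n - π** m ◇ π** n, g⟩ = ⟨m □ n - m ◇ n, π* g⟩`, and both conditions say that
this quantity always vanishes.
-/

section transpose

variable {𝕜 E F : Type*} [RCLike 𝕜] [NormedAddCommGroup E] [NormedSpace 𝕜 E]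
  [NormedAddCommGroup F] [NormedSpace 𝕜 F]

def transpose (T : E →L[𝕜] F) : StrongDual 𝕜 F →L[𝕜] StrongDual 𝕜 E :=
  (ContinuousLinearMap.compL 𝕜 E F 𝕜).flip T

@[simp] lemma transpose_apply (T : E →L[𝕜] F) (g : StrongDual 𝕜 F) :
    transpose T g = g.comp T := rfl

lemma norm_le_mul_norm_transpose (T : E →L[𝕜] F) {K : ℝ} (hK : 0 ≤ K)
    (hlift : ∀ y, ∃ x, T x = y ∧ ‖x‖ ≤ K * ‖y‖) (g : StrongDual 𝕜 F) :
    ‖g‖ ≤ K * ‖transpose T g‖ := by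
  refine g.opNorm_le_bound (by positivity) fun y => ?_
  obtain ⟨x, rfl, hx⟩ := hlift y
  calc ‖g (T x)‖ = ‖transpose T g x‖ := rfl
    _ ≤ ‖transpose T g‖ * ‖x‖ := (transpose T g).le_opNorm x
    _ ≤ ‖transpose T g‖ * (K * ‖T x‖) := by gcongr
    _ = K * ‖transpose T g‖ * ‖T x‖ := by ring

lemma transpose_surjective_of_norm_le (T : E →L[𝕜] F) {K : ℝ}
    (hT : ∀ x, ‖x‖ ≤ K * ‖T x‖) : Function.Surjective (transpose T) := by
  intro M
  have hinj : Function.Injective T := by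
    refine (injective_iff_map_eq_zero T).2 fun x hx => norm_le_zero_iff.1 ?_
    simpa [hx] using hT x
  let e := LinearEquiv.ofInjective T.toLinearMap hinj
  have he : ∀ y, T (e.symm y) = y := fun y => congrArg Subtype.val (e.apply_symm_apply y)
  let Λ : StrongDual 𝕜 (LinearMap.range T.toLinearMap) :=
    (M.toLinearMap ∘ₗ e.symm.toLinearMap).mkContinuous (‖M‖ * K) fun y => by
      calc ‖M (e.symm y)‖ ≤ ‖M‖ * ‖e.symm y‖ := M.le_opNorm _
        _ ≤ ‖M‖ * (K * ‖T (e.symm y)‖) := by gcongr; exact hT _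
        _ = ‖M‖ * K * ‖y‖ := by rw [he, mul_assoc]; rfl
  obtain ⟨m, hm, -⟩ := exists_extension_norm_eq _ Λ
  refine ⟨m, ContinuousLinearMap.ext fun x => ?_⟩
  calc m (T x) = Λ (e x) := hm (e x)
    _ = M x := by simp [Λ]

lemma exists_transpose_eq_of_isQuotientMap (T : E →L[𝕜] F) (hT : IsQuotientMap T)
    (f : StrongDual 𝕜 E) (hf : ∀ x, T x = 0 → f x = 0) :
    ∃ g : StrongDual 𝕜 F, transpose T g = f := by
  have hker : f.toLinearMap ∈ (LinearMap.ker T.toLinearMap).dualAnnihilator :=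
    (Submodule.mem_dualAnnihilator _).2 hf
  rw [← LinearMap.range_dualMap_eq_dualAnnihilator_ker_of_surjective _ hT.surjective] at hker
  obtain ⟨g, hg⟩ := hker
  have hcont : Continuous g := hT.continuous_iff.2 <| by
    convert f.continuous
    exact congrArg DFunLike.coe hg
  exact ⟨⟨g, hcont⟩, ContinuousLinearMap.ext fun x => LinearMap.congr_fun hg x⟩

lemma transpose_transpose_surjective [CompleteSpace E] [CompleteSpace F] {T : E →L[𝕜] F}
    (hT : Function.Surjective T) : Function.Surjective (transpose (transpose T)) := by
  obtain ⟨K, hK, hlift⟩ := T.exists_preimage_norm_le hT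
  exact transpose_surjective_of_norm_le _ (norm_le_mul_norm_transpose T hK.le hlift)

end transpose

section intertwine

variable {C Y : Type*} [NormedAddCommGroup C] [NormedSpace ℂ C] [NormedAddCommGroup Y]
  [NormedSpace ℂ Y] {π : A →L[ℂ] C} {ρ : X →L[ℂ] Y}
  {sA : X →L[ℂ] A →L[ℂ] X} {sC : Y →L[ℂ] C →L[ℂ] Y}

lemma transpose_fodot (h : ∀ x a, ρ (sA x a) = sC (ρ x) (π a)) (g : StrongDual ℂ Y) (x : X) :
    transpose π (fodot sC g (ρ x)) = fodot sA (transpose ρ g) x := by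
  ext a
  simp [h]

lemma transpose_mdot (h : ∀ x a, ρ (sA x a) = sC (ρ x) (π a)) (n : Bidual A)
    (g : StrongDual ℂ Y) :
    transpose ρ (mdot sC (transpose (transpose π) n) g) = mdot sA n (transpose ρ g) := by
  ext x
  exact congrArg n (transpose_fodot h g x)

lemma transpose_transpose_modAct (h : ∀ x a, ρ (sA x a) = sC (ρ x) (π a)) (p : Bidual X)
    (m : Bidual A) :
    transpose (transpose ρ) (modAct sA p m) =
      modAct sC (transpose (transpose ρ) p) (transpose (transpose π) m) := by
  ext g
  exact congrArg p (transpose_mdot h m g).symm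

variable {mA : A →L[ℂ] A →L[ℂ] A} {mC : C →L[ℂ] C →L[ℂ] C}

lemma transpose_transpose_arens1 (h : ∀ a b, π (mA a b) = mC (π a) (π b)) (m n : Bidual A) :
    transpose (transpose π) (arens1 mA m n) =
      arens1 mC (transpose (transpose π) m) (transpose (transpose π) n) :=
  transpose_transpose_modAct h m n

lemma transpose_transpose_arens2 (h : ∀ a b, π (mA a b) = mC (π a) (π b)) (m n : Bidual A) :
    transpose (transpose π) (arens2 mA m n) =
      arens2 mC (transpose (transpose π) m) (transpose (transpose π) n) :=
  transpose_transpose_modAct (sA := mA.flip) (sC := mC.flip) (fun a b => h b a) n m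

lemma range_transpose_eq_perp [CompleteSpace A] [CompleteSpace C] (hπ : Function.Surjective π) :
    Set.range (transpose π) = perp {a | π a = 0} := by
  ext f
  constructor
  · rintro ⟨g, rfl⟩ a ha
    simp [show π a = 0 from ha]
  · exact exists_transpose_eq_of_isQuotientMap π (π.isQuotientMap hπ) f

end intertwine

theorem statement0_general
    {A : Type*} [NormedAddCommGroup A] [NormedSpace ℂ A] [CompleteSpace A]
    (mA : A →L[ℂ] A →L[ℂ] A)
    (J : Submodule ℂ A)
    -- a realization of the quotient Banach algebra `A/J`:
    {C : Type*} [NormedAddCommGroup C] [NormedSpace ℂ C] [CompleteSpace C]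
    (mC : C →L[ℂ] C →L[ℂ] C) (π : A →L[ℂ] C)
    (hπsurj : Function.Surjective π)
    (hπker : ∀ a : A, π a = 0 ↔ a ∈ J)
    (hπmul : ∀ a b : A, π (mA a b) = mC (π a) (π b)) :
    perp (J : Set A) ⊆ WAP mA ↔ ArensRegular mC := by
  have hperp : perp (J : Set A) = Set.range (transpose π) := by
    rw [range_transpose_eq_perp hπsurj]
    simp only [hπker, SetLike.setOfPred_mem_eq]
  constructor
  · intro hwap M N
    obtain ⟨m, rfl⟩ := transpose_transpose_surjective hπsurj M
    obtain ⟨n, rfl⟩ := transpose_transpose_surjective hπsurj N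
    ext g
    rw [← transpose_transpose_arens1 hπmul, ← transpose_transpose_arens2 hπmul]
    exact hwap (hperp ▸ ⟨g, rfl⟩) m n
  · rintro hreg f hf m n
    obtain ⟨g, rfl⟩ := hperp ▸ hf
    change transpose (transpose π) (arens1 mA m n) g = transpose (transpose π) (arens2 mA m n) g
    rw [transpose_transpose_arens1 hπmul, transpose_transpose_arens2 hπmul, hreg]

/-- Let `A` be a Banach algebra and `J` a closed two-sided ideal of `A`.
Then `J` is co-Rosenthal (i.e. `J^⊥ ⊆ WAP(A)`) if and only if the quotient Banach
algebra `A/J` (presented here as a Banach algebra `C` together with the quotient map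
`π : A → C`) is Arens regular. -/
theorem statement0
    {A : Type*} [NormedAddCommGroup A] [NormedSpace ℂ A] [CompleteSpace A]
    (mA : A →L[ℂ] A →L[ℂ] A) (hA : IsBanachAlgebra mA)
    (J : Submodule ℂ A) (hJclosed : IsClosed (J : Set A))
    (hJideal : IsTwoSidedIdeal mA (J : Set A))
    -- a realization of the quotient Banach algebra `A/J`:
    {C : Type*} [NormedAddCommGroup C] [NormedSpace ℂ C] [CompleteSpace C]
    (mC : C →L[ℂ] C →L[ℂ] C) (π : A →L[ℂ] C)
    (hπsurj : Function.Surjective π)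
    (hπker : ∀ a : A, π a = 0 ↔ a ∈ J)
    (hπmul : ∀ a b : A, π (mA a b) = mC (π a) (π b))
    (hπnorm : ∀ c : C, ‖c‖ = sInf {r : ℝ | ∃ a : A, π a = c ∧ ‖a‖ = r}) :
    perp (J : Set A) ⊆ WAP mA ↔ ArensRegular mC :=
  statement0_general mA J mC π hπsurj hπker hπmul

end ArensNote
end
end

section
/- Let A be a Banach algebra, J a closed two-sided ideal of A, and i : J → A the inclusion map with adjoint i* : A* → J* and second adjoint i** : J** → A**. Then J is co-Rosenthal (i.e., J^⊥ ⊆ WAP(A)) if and only if i**( (i*(WAP(A)))^⊥ ) = WAP(A)^⊥, where (i*(WAP(A)))^⊥ = {m∈J** : ⟨m, i*(f)⟩=0 for all f∈WAP(A)} and WAP(A)^⊥ = {m∈A** : ⟨m,f⟩=0 for all f∈WAP(A)}. -/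
/-! By norm-preserving Hahn–Banach extension, `i** : J** → A**` maps onto the functionals
vanishing on `J^⊥`, so if `J^⊥ ⊆ WAP(A)` every element of `WAP(A)^⊥` lifts. Conversely,
`WAP(A)` is a closed subspace of `A*`, so a functional outside it is detected by some element
of `WAP(A)^⊥`; if that element is `i** n`, it vanishes on `J^⊥`. -/

noncomputable section

open NormedSpace Filter Topology

namespace ArensNote

variable {X A : Type*} [NormedAddCommGroup X] [NormedSpace ℂ X]
  [NormedAddCommGroup A] [NormedSpace ℂ A]

theorem _root_.Submodule.exists_dual_eq_zero_on_of_notMem {𝕜 E : Type*} [RCLike 𝕜]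
    [NormedAddCommGroup E] [NormedSpace 𝕜 E] (W : Submodule 𝕜 E) (hW : IsClosed (W : Set E))
    {x : E} (hx : x ∉ W) : ∃ g : StrongDual 𝕜 E, (∀ y ∈ W, g y = 0) ∧ g x ≠ 0 := by
  have hx' : W.mkQ x ≠ 0 := by rwa [Ne, Submodule.mkQ_apply, Submodule.Quotient.mk_eq_zero]
  obtain ⟨g, hg⟩ := SeparatingDual.exists_ne_zero (R := 𝕜) hx'
  refine ⟨g.comp ⟨W.mkQ, W.continuous_mkQ⟩, fun y hy => ?_, hg⟩
  simp [(Submodule.Quotient.mk_eq_zero W).mpr hy]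

def wapSubmodule (mA : A →L[ℂ] A →L[ℂ] A) : Submodule ℂ (StrongDual ℂ A) where
  carrier := WAP mA
  add_mem' hf hg m n := by simp only [map_add, hf m n, hg m n]
  zero_mem' m n := by simp
  smul_mem' c f hf m n := by simp only [map_smul, hf m n]

theorem isClosed_wapSubmodule (mA : A →L[ℂ] A →L[ℂ] A) :
    IsClosed (wapSubmodule mA : Set (StrongDual ℂ A)) := by
  change IsClosed {f | ∀ m n : Bidual A, arens1 mA m n f = arens2 mA m n f}
  simp only [Set.ofPred_forall]
  exact isClosed_iInter fun m => isClosed_iInter fun n =>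
    isClosed_eq (arens1 mA m n).continuous (arens2 mA m n).continuous

theorem restrictDual_eq_zero_iff (J : Submodule ℂ A) (f : StrongDual ℂ A) :
    restrictDual J f = 0 ↔ f ∈ perp (J : Set A) :=
  ⟨fun h a ha => congrArg (fun g => g ⟨a, ha⟩) h, fun h => by ext x; exact h x x.2⟩

theorem exists_bidualTrans_eq (J : Submodule ℂ A) {m : Bidual A}
    (hm : ∀ f ∈ perp (J : Set A), m f = 0) : ∃ n : Bidual ↥J, bidualTrans J n = m := by
  choose ext hext_restrict hext_norm using exists_extension_norm_eq (𝕜 := ℂ) J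
  have restrict_ext (g : StrongDual ℂ ↥J) : restrictDual J (ext g) = g := by
    ext x; exact hext_restrict g x
  have m_congr {F G : StrongDual ℂ A} (h : restrictDual J F = restrictDual J G) : m F = m G := by
    rw [← sub_eq_zero, ← map_sub]
    exact hm _ ((restrictDual_eq_zero_iff J _).mp (by rw [map_sub, h, sub_self]))
  let n : Bidual ↥J := LinearMap.mkContinuous
    { toFun := fun g => m (ext g)
      map_add' := fun g₁ g₂ => by
        rw [← map_add]
        exact m_congr (by simp only [map_add, restrict_ext])
      map_smul' := fun c g => by
        rw [RingHom.id_apply, ← map_smul]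
        exact m_congr (by simp only [map_smul, restrict_ext]) }
    ‖m‖ fun g => (m.le_opNorm (ext g)).trans_eq (by rw [hext_norm])
  exact ⟨n, ContinuousLinearMap.ext fun f => m_congr (restrict_ext _)⟩

theorem perp_subset_iff_image_bidualTrans_eq (J : Submodule ℂ A) (W : Submodule ℂ (StrongDual ℂ A))
    (hW : IsClosed (W : Set (StrongDual ℂ A))) :
    perp (J : Set A) ⊆ W ↔
      bidualTrans J '' {m : Bidual ↥J | ∀ f ∈ W, m (restrictDual J f) = 0} = perp' W := by
  constructor
  · intro hJW
    refine Set.Subset.antisymm ?_ fun m hm => ?_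
    · rintro _ ⟨n, hn, rfl⟩ f hf
      exact hn f hf
    obtain ⟨n, rfl⟩ := exists_bidualTrans_eq J fun f hf => hm f (hJW hf)
    exact ⟨n, hm, rfl⟩
  · intro himage f hf
    by_contra hfW
    obtain ⟨m, hmW, hmf⟩ := W.exists_dual_eq_zero_on_of_notMem hW hfW
    obtain ⟨n, -, rfl⟩ := himage.symm.subset (show m ∈ perp' W from hmW)
    exact hmf (by rw [bidualTrans_apply, (restrictDual_eq_zero_iff J f).mpr hf, map_zero])

theorem statement1_general
    {A : Type*} [NormedAddCommGroup A] [NormedSpace ℂ A]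
    (mA : A →L[ℂ] A →L[ℂ] A)
    (J : Submodule ℂ A) :
    perp (J : Set A) ⊆ WAP mA ↔
      bidualTrans J '' {m : Bidual ↥J | ∀ f ∈ WAP mA, m (restrictDual J f) = 0}
        = perp' (WAP mA) :=
  perp_subset_iff_image_bidualTrans_eq J (wapSubmodule mA) (isClosed_wapSubmodule mA)

/-- Let `A` be a Banach algebra, `J` a closed two-sided ideal of `A`,
`i : J → A` the inclusion with adjoint `i* : A* → J*` (`restrictDual J`) and second
adjoint `i** : J** → A**` (`bidualTrans J`).  Then `J` is co-Rosenthal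
(`J^⊥ ⊆ WAP(A)`) iff `i**((i*(WAP(A)))^⊥) = WAP(A)^⊥`. -/
theorem statement1
    {A : Type*} [NormedAddCommGroup A] [NormedSpace ℂ A] [CompleteSpace A]
    (mA : A →L[ℂ] A →L[ℂ] A) (hA : IsBanachAlgebra mA)
    (J : Submodule ℂ A) (hJclosed : IsClosed (J : Set A))
    (hJideal : IsTwoSidedIdeal mA (J : Set A)) :
    perp (J : Set A) ⊆ WAP mA ↔
      bidualTrans J '' {m : Bidual ↥J | ∀ f ∈ WAP mA, m (restrictDual J f) = 0}
        = perp' (WAP mA) :=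
  statement1_general mA J

end ArensNote
end
end

section
/- Let A be a Banach algebra, J a closed two-sided ideal of A, ι : A → A** the canonical embedding, and identify J** with J^⊥⊥ ⊆ A**. If e and f are two mixed identities of A** and e □ J^⊥⊥ = ι(J), then also f □ J^⊥⊥ = ι(J). In other words, the property of being a Riesz ideal does not depend on the choice of the mixed identity. -/
noncomputable section

open NormedSpace Filter Topology

namespace ArensNote

variable {X A : Type*} [NormedAddCommGroup X] [NormedSpace ℂ X]
  [NormedAddCommGroup A] [NormedSpace ℂ A]

section arens

variable (mA : A →L[ℂ] A →L[ℂ] A)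

lemma fodot_fodot (hmul : ∀ a b c : A, mA (mA a b) c = mA a (mA b c))
    (g : StrongDual ℂ A) (φ ψ : A) :
    fodot mA (fodot mA g φ) ψ = fodot mA g (mA φ ψ) := by
  ext χ
  simp only [fodot_apply, hmul]

lemma fodot_mdot (hmul : ∀ a b c : A, mA (mA a b) c = mA a (mA b c))
    (p : Bidual A) (g : StrongDual ℂ A) (φ : A) :
    fodot mA (mdot mA p g) φ = mdot mA p (fodot mA g φ) := by
  ext ψ
  simp only [fodot_apply, mdot_apply, fodot_fodot mA hmul]

lemma mdot_mdot (hmul : ∀ a b c : A, mA (mA a b) c = mA a (mA b c))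
    (n p : Bidual A) (g : StrongDual ℂ A) :
    mdot mA n (mdot mA p g) = mdot mA (arens1 mA n p) g := by
  ext φ
  simp only [mdot_apply, arens1, modAct_apply, fodot_mdot mA hmul]

lemma arens1_assoc (hmul : ∀ a b c : A, mA (mA a b) c = mA a (mA b c))
    (m n p : Bidual A) :
    arens1 mA (arens1 mA m n) p = arens1 mA m (arens1 mA n p) := by
  ext g
  simp only [arens1, modAct_apply, mdot_mdot mA hmul]

lemma arens1_iota_eq_arens2 (m : Bidual A) (a : A) :
    arens1 mA m (iota A a) = arens2 mA m (iota A a) :=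
  rfl

lemma IsMixedIdentity.arens1_iota {f : Bidual A} (hf : IsMixedIdentity mA f) (a : A) :
    arens1 mA f (iota A a) = iota A a := by
  rw [arens1_iota_eq_arens2, hf.2]

lemma IsMixedIdentity.arens1_arens1 (hmul : ∀ a b c : A, mA (mA a b) c = mA a (mA b c))
    {e : Bidual A} (he : IsMixedIdentity mA e) (f m : Bidual A) :
    arens1 mA f (arens1 mA e m) = arens1 mA f m := by
  rw [← arens1_assoc mA hmul, he.1]

end arens

theorem statement3_general
    {A : Type*} [NormedAddCommGroup A] [NormedSpace ℂ A]
    (mA : A →L[ℂ] A →L[ℂ] A) (hA : IsBanachAlgebra mA)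
    (J : Submodule ℂ A)
    (e f : Bidual A)
    (he : IsMixedIdentity mA e) (hf : IsMixedIdentity mA f)
    (hRiesz : (fun m => arens1 mA e m) '' perp' (perp (J : Set A))
      = iota A '' (J : Set A)) :
    (fun m => arens1 mA f m) '' perp' (perp (J : Set A)) = iota A '' (J : Set A) := by
  calc (fun m => arens1 mA f m) '' perp' (perp (J : Set A))
      = (fun m => arens1 mA f m) '' ((fun m => arens1 mA e m) '' perp' (perp (J : Set A))) := by
        rw [Set.image_image]
        simp only [he.arens1_arens1 mA hA.mul_assoc]
    _ = (fun m => arens1 mA f m) '' (iota A '' (J : Set A)) := by rw [hRiesz]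
    _ = iota A '' (J : Set A) := by
        rw [Set.image_image]
        simp only [hf.arens1_iota mA]

/-- Being a Riesz ideal does not depend on the choice of mixed identity:
if `e` and `f` are mixed identities of `A**` and `e □ J^⊥⊥ = ι(J)`, then also
`f □ J^⊥⊥ = ι(J)`. -/
theorem statement3
    {A : Type*} [NormedAddCommGroup A] [NormedSpace ℂ A] [CompleteSpace A]
    (mA : A →L[ℂ] A →L[ℂ] A) (hA : IsBanachAlgebra mA)
    (J : Submodule ℂ A) (hJclosed : IsClosed (J : Set A))
    (hJideal : IsTwoSidedIdeal mA (J : Set A))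
    (e f : Bidual A)
    (he : IsMixedIdentity mA e) (hf : IsMixedIdentity mA f)
    (hRiesz : (fun m => arens1 mA e m) '' perp' (perp (J : Set A))
      = iota A '' (J : Set A)) :
    (fun m => arens1 mA f m) '' perp' (perp (J : Set A)) = iota A '' (J : Set A) :=
  statement3_general mA hA J e f he hf hRiesz

end ArensNote
end
end

section
/- Let B be a Banach algebra and X a right Banach B-module such that the induced right B**-module action on X** is not Arens regular, i.e., there exists p ∈ X** for which the map m ↦ pm : (B**, weak*) → (X**, weak*) is not continuous. Then the Banach algebra B_X = X ⊕₁ B with product (x,φ)(y,ψ) = (xψ, φψ) is not Arens regular. In particular (taking J = X×{0}, so that J and B_X/J ≅ B), if in addition B is Arens regular, then B_X is a Banach algebra containing a closed ideal J such that J and B_X/J are Arens regular while B_X is not: Arens regularity is not a three-space property. -/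
/-!
If `B_X` were Arens regular, then for `p ∈ X**` and `m ∈ B**` the module product `p·m` is
computed inside `B_X**` as the first Arens product of the images of `p` and `m` (with `X` and
`B` embedded as the two summands); by regularity it equals the second Arens product, which is
weak*-continuous in its right variable — contradicting the choice of `p`.
For the three-space part, the product of `B_X` vanishes on `J = X × {0}`, and a quotient map
with kernel `J` restricts on `{0} × B` to a multiplicative linear bijection onto `B_X / J`,
an isomorphism of Banach algebras by the open mapping theorem; Arens regularity transfers along
such isomorphisms by naturality of the Arens products.
-/

noncomputable section

open NormedSpace Filter Topology

namespace ArensNote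

variable {X A : Type*} [NormedAddCommGroup X] [NormedSpace ℂ X]
  [NormedAddCommGroup A] [NormedSpace ℂ A]

section adjoint

variable {X' A' : Type*} [NormedAddCommGroup X'] [NormedSpace ℂ X']
  [NormedAddCommGroup A'] [NormedSpace ℂ A']

def dualMap (σ : X →L[ℂ] X') : StrongDual ℂ X' →L[ℂ] StrongDual ℂ X :=
  (ContinuousLinearMap.compL ℂ X X' ℂ).flip σ

@[simp] lemma dualMap_apply (σ : X →L[ℂ] X') (g : StrongDual ℂ X') (x : X) :
    dualMap σ g x = g (σ x) := rfl

lemma dualMap_dualMap_apply (σ : X →L[ℂ] X') (p : Bidual X) (g : StrongDual ℂ X') :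
    dualMap (dualMap σ) p g = p (dualMap σ g) := rfl

lemma modAct_dualMap_dualMap (sm : X →L[ℂ] A →L[ℂ] X) (sm' : X' →L[ℂ] A' →L[ℂ] X')
    (σ : X →L[ℂ] X') (τ : A →L[ℂ] A') (hστ : ∀ x a, sm' (σ x) (τ a) = σ (sm x a))
    (p : Bidual X) (n : Bidual A) :
    modAct sm' (dualMap (dualMap σ) p) (dualMap (dualMap τ) n) =
      dualMap (dualMap σ) (modAct sm p n) := by
  have hfodot : ∀ (g : StrongDual ℂ X') (x : X),
      dualMap τ (fodot sm' g (σ x)) = fodot sm (dualMap σ g) x := by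
    intro g x; ext a; simp [hστ]
  have hmdot : ∀ g : StrongDual ℂ X',
      dualMap σ (mdot sm' (dualMap (dualMap τ) n) g) = mdot sm n (dualMap σ g) := by
    intro g; ext x; simp only [dualMap_apply, mdot_apply, hfodot]
  ext g
  simp only [modAct_apply, dualMap_dualMap_apply, hmdot]

lemma ArensRegular.of_continuousLinearEquiv {mA : A →L[ℂ] A →L[ℂ] A}
    {mA' : A' →L[ℂ] A' →L[ℂ] A'} (hreg : ArensRegular mA) (e : A ≃L[ℂ] A')
    (he : ∀ a b, mA' (e a) (e b) = e (mA a b)) : ArensRegular mA' := by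
  have hsurj : Function.Surjective (dualMap (dualMap (e : A →L[ℂ] A'))) := by
    intro M
    refine ⟨dualMap (dualMap (e.symm : A' →L[ℂ] A)) M, ?_⟩
    ext g
    simp only [dualMap_dualMap_apply]
    congr 1
    ext a'
    simp
  have he_flip : ∀ a b, mA'.flip (e a) (e b) = e (mA.flip a b) := fun a b => he b a
  intro M N
  obtain ⟨m, rfl⟩ := hsurj M
  obtain ⟨n, rfl⟩ := hsurj N
  rw [arens1, arens2, modAct_dualMap_dualMap mA mA' _ _ he,
    modAct_dualMap_dualMap mA.flip mA'.flip _ _ he_flip]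
  exact congrArg _ (hreg m n)

lemma arensRegular_zero : ArensRegular (0 : A →L[ℂ] A →L[ℂ] A) := by
  have hmdot : ∀ (m : Bidual A) (f : StrongDual ℂ A), mdot (0 : A →L[ℂ] A →L[ℂ] A) m f = 0 := by
    intro m f; ext x
    rw [mdot_apply, show fodot _ f x = 0 by ext a; simp]
    simp
  intro m n
  ext f
  simp [arens1, arens2, hmdot]

theorem continuous_modAct_of_arensRegular {B : Type*} [NormedAddCommGroup B]
    [NormedSpace ℂ B] (sm : X →L[ℂ] B →L[ℂ] X) (mA : A →L[ℂ] A →L[ℂ] A)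
    (hreg : ArensRegular mA) (ι : X →L[ℂ] A) (κ : B →L[ℂ] A) (ρ : A →L[ℂ] X)
    (hρι : ∀ x, ρ (ι x) = x) (hmul : ∀ x b, mA (ι x) (κ b) = ι (sm x b))
    (p : Bidual X) (f : StrongDual ℂ X) :
    Continuous fun m : WeakDual ℂ (StrongDual ℂ B) =>
      modAct sm p (WeakDual.toStrongDual m) f := by
  have hf : dualMap ι (dualMap ρ f) = f := by ext x; simp [hρι]
  have key : ∀ n : Bidual B, modAct sm p n f =
      n (dualMap κ (mdot mA.flip (dualMap (dualMap ι) p) (dualMap ρ f))) := by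
    intro n
    calc modAct sm p n f
        = modAct mA (dualMap (dualMap ι) p) (dualMap (dualMap κ) n) (dualMap ρ f) := by
          rw [modAct_dualMap_dualMap sm mA ι κ hmul, dualMap_dualMap_apply, hf]
      _ = arens2 mA (dualMap (dualMap ι) p) (dualMap (dualMap κ) n) (dualMap ρ f) := by
          rw [← hreg]; rfl
      _ = _ := rfl
  simp only [key]
  exact WeakDual.eval_continuous _

end adjoint

lemma ell1_ext {V W : Type*} {u v : WithLp 1 (V × W)} (hfst : u.fst = v.fst)
    (hsnd : u.snd = v.snd) : u = v :=
  (WithLp.equiv 1 (V × W)).injective (Prod.ext hfst hsnd)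

section ell1Sum

variable (X) (B : Type*) [NormedAddCommGroup B] [NormedSpace ℂ B]

def inl1 : X →L[ℂ] WithLp 1 (X × B) :=
  (WithLp.prodContinuousLinearEquiv 1 ℂ X B).symm.toContinuousLinearMap.comp
    (ContinuousLinearMap.inl ℂ X B)

def inr1 : B →L[ℂ] WithLp 1 (X × B) :=
  (WithLp.prodContinuousLinearEquiv 1 ℂ X B).symm.toContinuousLinearMap.comp
    (ContinuousLinearMap.inr ℂ X B)

def fst1 : WithLp 1 (X × B) →L[ℂ] X :=
  (ContinuousLinearMap.fst ℂ X B).comp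
    (WithLp.prodContinuousLinearEquiv 1 ℂ X B).toContinuousLinearMap

variable {X B}

@[simp] lemma inl1_fst (x : X) : (inl1 X B x).fst = x := rfl

@[simp] lemma inl1_snd (x : X) : (inl1 X B x).snd = 0 := rfl

@[simp] lemma inr1_fst (b : B) : (inr1 X B b).fst = 0 := rfl

@[simp] lemma inr1_snd (b : B) : (inr1 X B b).snd = b := rfl

@[simp] lemma fst1_inl1 (x : X) : fst1 X B (inl1 X B x) = x := rfl

lemma inl1_add_inr1 (u : WithLp 1 (X × B)) : inl1 X B u.fst + inr1 X B u.snd = u :=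
  ell1_ext (by simp) (by simp)

lemma mem_sndZero_iff (u : WithLp 1 (X × B)) : u ∈ sndZero X B ↔ u.snd = 0 := by
  simp [sndZero, Submodule.mem_prod]

lemma isClosed_sndZero : IsClosed (sndZero X B : Set (WithLp 1 (X × B))) := by
  have hsnd : Continuous fun u : WithLp 1 (X × B) => u.snd :=
    continuous_snd.comp (WithLp.prodContinuousLinearEquiv 1 ℂ X B).continuous
  convert isClosed_singleton.preimage hsnd
  ext u
  exact mem_sndZero_iff u

end ell1Sum

section semidirect

variable {B : Type*} [NormedAddCommGroup B] [NormedSpace ℂ B]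

/-- The product `(x, φ)(y, ψ) = (xψ, φψ)` of `B_X = X ⊕₁ B`. -/
def IsSemidirectMul (sm : X →L[ℂ] B →L[ℂ] X) (mB : B →L[ℂ] B →L[ℂ] B)
    (mBX : WithLp 1 (X × B) →L[ℂ] WithLp 1 (X × B) →L[ℂ] WithLp 1 (X × B)) : Prop :=
  ∀ u v : WithLp 1 (X × B),
    WithLp.equiv 1 (X × B) (mBX u v) =
      (sm (WithLp.equiv 1 (X × B) u).1 (WithLp.equiv 1 (X × B) v).2,
       mB (WithLp.equiv 1 (X × B) u).2 (WithLp.equiv 1 (X × B) v).2)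

variable {sm : X →L[ℂ] B →L[ℂ] X} {mB : B →L[ℂ] B →L[ℂ] B}
  {mBX : WithLp 1 (X × B) →L[ℂ] WithLp 1 (X × B) →L[ℂ] WithLp 1 (X × B)}

lemma fst_mul (hmBX : IsSemidirectMul sm mB mBX) (u v : WithLp 1 (X × B)) :
    (mBX u v).fst = sm u.fst v.snd :=
  congrArg Prod.fst (hmBX u v)

lemma snd_mul (hmBX : IsSemidirectMul sm mB mBX) (u v : WithLp 1 (X × B)) :
    (mBX u v).snd = mB u.snd v.snd :=
  congrArg Prod.snd (hmBX u v)

lemma mul_inl1_inr1 (hmBX : IsSemidirectMul sm mB mBX) (x : X) (b : B) :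
    mBX (inl1 X B x) (inr1 X B b) = inl1 X B (sm x b) :=
  ell1_ext (by simp [fst_mul hmBX]) (by simp [snd_mul hmBX])

lemma mul_inr1_inr1 (hmBX : IsSemidirectMul sm mB mBX) (a b : B) :
    mBX (inr1 X B a) (inr1 X B b) = inr1 X B (mB a b) :=
  ell1_ext (by simp [fst_mul hmBX]) (by simp [snd_mul hmBX])

lemma mul_eq_zero_of_mem_sndZero (hmBX : IsSemidirectMul sm mB mBX) (u : WithLp 1 (X × B))
    {v : WithLp 1 (X × B)} (hv : v ∈ sndZero X B) : mBX u v = 0 := by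
  rw [mem_sndZero_iff] at hv
  exact ell1_ext (by simp [fst_mul hmBX, hv]) (by simp [snd_mul hmBX, hv])

lemma isTwoSidedIdeal_sndZero (hmBX : IsSemidirectMul sm mB mBX) :
    IsTwoSidedIdeal mBX (sndZero X B : Set (WithLp 1 (X × B))) := by
  intro u v hu
  rw [SetLike.mem_coe, mem_sndZero_iff] at hu
  simp [mem_sndZero_iff, snd_mul hmBX, hu]

lemma arensRegular_sndZero (hmBX : IsSemidirectMul sm mB mBX)
    (mJ : ↥(sndZero X B) →L[ℂ] ↥(sndZero X B) →L[ℂ] ↥(sndZero X B))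
    (hmJ : ∀ u v : ↥(sndZero X B), (mJ u v : WithLp 1 (X × B)) = mBX ↑u ↑v) :
    ArensRegular mJ := by
  have hzero : mJ = 0 := by
    ext u v
    rw [hmJ, mul_eq_zero_of_mem_sndZero hmBX _ v.2]
    rfl
  exact hzero ▸ arensRegular_zero

lemma arensRegular_of_quotient [CompleteSpace B] (hmBX : IsSemidirectMul sm mB mBX)
    (hB : ArensRegular mB) {C : Type*} [NormedAddCommGroup C] [NormedSpace ℂ C] [CompleteSpace C]
    (mC : C →L[ℂ] C →L[ℂ] C) (π : WithLp 1 (X × B) →L[ℂ] C) (hπ : Function.Surjective π)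
    (hker : ∀ u, π u = 0 ↔ u ∈ sndZero X B) (hmul : ∀ u v, π (mBX u v) = mC (π u) (π v)) :
    ArensRegular mC := by
  set σ : B →L[ℂ] C := π.comp (inr1 X B)
  have hπinl : ∀ x : X, π (inl1 X B x) = 0 := fun x => (hker _).mpr <| by
    simp [mem_sndZero_iff]
  have hσinj : σ.ker = ⊥ := by
    refine LinearMap.ker_eq_bot'.mpr fun b hb => ?_
    simpa [mem_sndZero_iff] using (hker _).mp hb
  have hσsurj : σ.range = ⊤ := by
    refine LinearMap.range_eq_top.mpr fun c => ?_
    obtain ⟨u, rfl⟩ := hπ c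
    refine ⟨u.snd, ?_⟩
    conv_rhs => rw [← inl1_add_inr1 u]
    simp [σ, hπinl]
  refine hB.of_continuousLinearEquiv (ContinuousLinearEquiv.ofBijective σ hσinj hσsurj)
    fun a b => ?_
  simp only [ContinuousLinearEquiv.coeFn_ofBijective, σ, ContinuousLinearMap.comp_apply]
  rw [← hmul, mul_inr1_inr1 hmBX]

end semidirect

theorem statement12_general
    {X B : Type*} [NormedAddCommGroup X] [NormedSpace ℂ X]
    [NormedAddCommGroup B] [NormedSpace ℂ B] [CompleteSpace B]
    (mB : B →L[ℂ] B →L[ℂ] B)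
    (sm : X →L[ℂ] B →L[ℂ] X)
    (mBX : WithLp 1 (X × B) →L[ℂ] WithLp 1 (X × B) →L[ℂ] WithLp 1 (X × B))
    (hmBX : ∀ u v : WithLp 1 (X × B),
      WithLp.equiv 1 (X × B) (mBX u v) =
        (sm (WithLp.equiv 1 (X × B) u).1 (WithLp.equiv 1 (X × B) v).2,
         mB (WithLp.equiv 1 (X × B) u).2 (WithLp.equiv 1 (X × B) v).2))
    -- the induced module action of `B**` on `X**` is not Arens regular:
    (hirr : ∃ p : Bidual X, ¬ ∀ f : StrongDual ℂ X,
      Continuous fun m : WeakDual ℂ (StrongDual ℂ B) =>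
        modAct sm p (WeakDual.toStrongDual m) f) :
    ¬ ArensRegular mBX ∧
    (ArensRegular mB →
      IsClosed (sndZero X B : Set (WithLp 1 (X × B))) ∧
      IsTwoSidedIdeal mBX (sndZero X B : Set (WithLp 1 (X × B))) ∧
      (∀ (mJ : ↥(sndZero X B) →L[ℂ] ↥(sndZero X B) →L[ℂ] ↥(sndZero X B)),
        (∀ u v : ↥(sndZero X B), (mJ u v : WithLp 1 (X × B)) = mBX ↑u ↑v) →
        ArensRegular mJ) ∧
      ∀ (C : Type*) [NormedAddCommGroup C] [NormedSpace ℂ C] [CompleteSpace C]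
        (mC : C →L[ℂ] C →L[ℂ] C) (π : WithLp 1 (X × B) →L[ℂ] C),
        Function.Surjective π →
        (∀ u : WithLp 1 (X × B), π u = 0 ↔ u ∈ sndZero X B) →
        (∀ u v : WithLp 1 (X × B), π (mBX u v) = mC (π u) (π v)) →
        (∀ c : C, ‖c‖ = sInf {r : ℝ | ∃ u : WithLp 1 (X × B), π u = c ∧ ‖u‖ = r}) →
        ArensRegular mC) := by
  obtain ⟨p, hp⟩ := hirr
  refine ⟨fun hreg => hp fun f => ?_, fun hB => ⟨isClosed_sndZero, isTwoSidedIdeal_sndZero hmBX,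
    arensRegular_sndZero hmBX, fun C _ _ _ mC π hπ hker hmul _ =>
      arensRegular_of_quotient hmBX hB mC π hπ hker hmul⟩⟩
  exact continuous_modAct_of_arensRegular sm mBX hreg (inl1 X B) (inr1 X B) (fst1 X B)
    (fst1_inl1 (B := B)) (mul_inl1_inr1 hmBX) p f

/-- Let `B` be a Banach algebra and `X` a right Banach `B`-module
whose induced right `B**`-module action on `X**` (the map `modAct sm`) is not Arens
regular: there is `p ∈ X**` for which `m ↦ p·m` is not weak*-weak* continuous
(continuity into the weak* topology being tested against every `f ∈ X*`).
Then `B_X = X ⊕₁ B` is not Arens regular.  In particular, if moreover `B` is Arens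
regular, then with `J = X × {0}` the algebra `B_X` contains a closed two-sided ideal
`J` such that `J` and `B_X / J` are Arens regular, while `B_X` is not:
Arens regularity is not a three-space property. -/
theorem statement12
    {X B : Type*} [NormedAddCommGroup X] [NormedSpace ℂ X] [CompleteSpace X]
    [NormedAddCommGroup B] [NormedSpace ℂ B] [CompleteSpace B]
    (mB : B →L[ℂ] B →L[ℂ] B) (hB : IsBanachAlgebra mB)
    (sm : X →L[ℂ] B →L[ℂ] X)
    (hsm_assoc : ∀ (x : X) (φ ψ : B), sm x (mB φ ψ) = sm (sm x φ) ψ)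
    (hsm_norm : ∀ (x : X) (φ : B), ‖sm x φ‖ ≤ ‖x‖ * ‖φ‖)
    (mBX : WithLp 1 (X × B) →L[ℂ] WithLp 1 (X × B) →L[ℂ] WithLp 1 (X × B))
    (hmBX : ∀ u v : WithLp 1 (X × B),
      WithLp.equiv 1 (X × B) (mBX u v) =
        (sm (WithLp.equiv 1 (X × B) u).1 (WithLp.equiv 1 (X × B) v).2,
         mB (WithLp.equiv 1 (X × B) u).2 (WithLp.equiv 1 (X × B) v).2))
    -- the induced module action of `B**` on `X**` is not Arens regular:
    (hirr : ∃ p : Bidual X, ¬ ∀ f : StrongDual ℂ X,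
      Continuous fun m : WeakDual ℂ (StrongDual ℂ B) =>
        modAct sm p (WeakDual.toStrongDual m) f) :
    ¬ ArensRegular mBX ∧
    (ArensRegular mB →
      IsClosed (sndZero X B : Set (WithLp 1 (X × B))) ∧
      IsTwoSidedIdeal mBX (sndZero X B : Set (WithLp 1 (X × B))) ∧
      (∀ (mJ : ↥(sndZero X B) →L[ℂ] ↥(sndZero X B) →L[ℂ] ↥(sndZero X B)),
        (∀ u v : ↥(sndZero X B), (mJ u v : WithLp 1 (X × B)) = mBX ↑u ↑v) →
        ArensRegular mJ) ∧
      ∀ (C : Type*) [NormedAddCommGroup C] [NormedSpace ℂ C] [CompleteSpace C]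
        (mC : C →L[ℂ] C →L[ℂ] C) (π : WithLp 1 (X × B) →L[ℂ] C),
        Function.Surjective π →
        (∀ u : WithLp 1 (X × B), π u = 0 ↔ u ∈ sndZero X B) →
        (∀ u v : WithLp 1 (X × B), π (mBX u v) = mC (π u) (π v)) →
        (∀ c : C, ‖c‖ = sInf {r : ℝ | ∃ u : WithLp 1 (X × B), π u = c ∧ ‖u‖ = r}) →
        ArensRegular mC) :=
  statement12_general mB sm mBX hmBX hirr

end ArensNote
end
end
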